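/- Let q be prime, p a positive integer with p ≤ Cq for a fixed constant C < 1, and A > 0. Then Σ_{l=1}^∞ d(l) d(ql - p) (ql - p)^{-1} e^{-√(ql-p)/(2q²)} = O_{ε,C}( q^ε (q-p)^{-1+ε} + q^{-1+ε} ) for every ε > 0. -/

import Mathlib

/-!
With `d(n) ≤ D_δ n^δ`, `ql - p ≥ (1 - C) q l` and `e^{-x} ≤ x^{-6δ}` applied to
`x = √(ql - p) / (2q²)`, the `l`-th term is `≪ q^{10δ-1} l^{-1-δ}`. Summing over `l` bounds the
whole series by `O(q^{-1+10δ})`, which is `O(q^{-1+ε})` for `δ ≤ ε / 10`.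
-/

open Real Finset

lemma add_one_le_mul_two_pow_rpow {δ : ℝ} (hδ : 0 < δ) (a : ℕ) :
    (a + 1 : ℝ) ≤ (1 + (δ * log 2)⁻¹) * ((2 : ℝ) ^ a) ^ δ := by
  have hL : 0 < δ * log 2 := mul_pos hδ (log_pos one_lt_two)
  have h2 : ((2 : ℝ) ^ a) ^ δ = exp (δ * log 2 * a) := by
    rw [← rpow_natCast, ← rpow_mul zero_le_two, rpow_def_of_pos zero_lt_two]
    ring_nf
  rw [h2]
  generalize δ * log 2 = L at hL ⊢
  have hexp := add_one_le_exp (L * a)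
  have ha : (a : ℝ) ≤ exp (L * a) / L := by
    rw [le_div_iff₀ hL]
    linarith
  calc (a + 1 : ℝ) ≤ exp (L * a) / L + exp (L * a) := by
        linarith [one_le_exp (by positivity : 0 ≤ L * a)]
    _ = (1 + L⁻¹) * exp (L * a) := by ring

lemma add_one_le_pow_rpow {x δ : ℝ} (hx : 0 ≤ x) (h : 2 ≤ x ^ δ) (a : ℕ) :
    (a + 1 : ℝ) ≤ (x ^ a) ^ δ := by
  rw [← rpow_natCast, ← rpow_mul hx, mul_comm, rpow_mul hx, rpow_natCast]
  calc (a + 1 : ℝ) ≤ 2 ^ a := by exact_mod_cast Nat.lt_two_pow_self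
    _ ≤ (x ^ δ) ^ a := pow_le_pow_left₀ zero_le_two h a

theorem Nat.card_divisors_le_mul_rpow {δ : ℝ} (hδ : 0 < δ) :
    ∃ D : ℝ, 0 < D ∧ ∀ n : ℕ, n ≠ 0 → (#n.divisors : ℝ) ≤ D * (n : ℝ) ^ δ := by
  set B := 1 + (δ * Real.log 2)⁻¹
  have hB : 1 ≤ B :=
    le_add_of_nonneg_right (inv_nonneg.mpr (mul_pos hδ (Real.log_pos one_lt_two)).le)
  -- `2 ≤ p ^ δ` once `N ≤ p`, so only the primes below `N` cost a factor `B`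
  set N := ⌈(2 : ℝ) ^ δ⁻¹⌉₊
  refine ⟨B ^ N, by positivity, fun n hn => ?_⟩
  have local_factor : ∀ p ∈ n.primeFactors, ((n.factorization p + 1 : ℕ) : ℝ) ≤
      (if p < N then B else 1) * ((p : ℝ) ^ n.factorization p) ^ δ := by
    intro p hp
    have hp2 : (2 : ℝ) ≤ p := by exact_mod_cast (Nat.prime_of_mem_primeFactors hp).two_le
    push_cast
    split_ifs with hpN
    · calc _ ≤ B * ((2 : ℝ) ^ n.factorization p) ^ δ := add_one_le_mul_two_pow_rpow hδ _
        _ ≤ B * ((p : ℝ) ^ n.factorization p) ^ δ := by gcongr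
    · rw [one_mul]
      refine add_one_le_pow_rpow (by positivity) ?_ _
      calc (2 : ℝ) = ((2 : ℝ) ^ δ⁻¹) ^ δ := by
            rw [← rpow_mul zero_le_two, inv_mul_cancel₀ hδ.ne', rpow_one]
        _ ≤ (p : ℝ) ^ δ := by
          gcongr
          exact (Nat.le_ceil _).trans (by exact_mod_cast not_lt.mp hpN)
  have small_primes : ∏ p ∈ n.primeFactors, (if p < N then B else 1) ≤ B ^ N := by
    rw [← prod_filter, prod_const]
    refine pow_le_pow_right₀ hB ((card_le_card fun p hp => ?_).trans (card_range N).le)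
    exact mem_range.mpr (mem_filter.mp hp).2
  have prod_eq_self : ∏ p ∈ n.primeFactors, ((p : ℝ) ^ n.factorization p) ^ δ = (n : ℝ) ^ δ := by
    rw [finsetProd_rpow _ _ fun p _ => by positivity]
    conv_rhs => rw [← Nat.prod_factorization_pow_eq_self hn]
    simp [Finsupp.prod]
  calc (#n.divisors : ℝ) = ∏ p ∈ n.primeFactors, ((n.factorization p + 1 : ℕ) : ℝ) := by
        rw [Nat.card_divisors hn]; push_cast; rfl
    _ ≤ ∏ p ∈ n.primeFactors, (if p < N then B else 1) * ((p : ℝ) ^ n.factorization p) ^ δ :=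
        prod_le_prod (fun _ _ => by positivity) local_factor
    _ ≤ B ^ N * (n : ℝ) ^ δ := by
        rw [prod_mul_distrib, prod_eq_self]
        gcongr

lemma rpow_le_exp {x t : ℝ} (hx : 0 ≤ x) (ht₀ : 0 ≤ t) (ht₁ : t ≤ 1) : x ^ t ≤ exp x := by
  rcases le_total x 1 with h | h
  · exact (rpow_le_one hx h ht₀).trans (one_le_exp hx)
  · calc x ^ t ≤ x ^ (1 : ℝ) := rpow_le_rpow_of_exponent_le h ht₁
      _ = x := rpow_one x
      _ ≤ exp x := by linarith [add_one_le_exp x]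

lemma exp_neg_sqrt_div_le {x s t : ℝ} (hx : 0 < x) (hs : 0 < s) (ht₀ : 0 ≤ t) (ht₁ : t ≤ 1) :
    exp (-√x / s) ≤ s ^ t * x ^ (-(t / 2)) := by
  have hy : 0 < √x / s := by positivity
  calc exp (-√x / s) = (exp (√x / s))⁻¹ := by rw [neg_div, exp_neg]
    _ ≤ ((√x / s) ^ t)⁻¹ := inv_anti₀ (rpow_pos_of_pos hy t) (rpow_le_exp hy.le ht₀ ht₁)
    _ = s ^ t * x ^ (-(t / 2)) := by
      rw [div_rpow (sqrt_nonneg x) hs.le, sqrt_eq_rpow, ← rpow_mul hx.le, inv_div,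
        div_eq_mul_inv, ← rpow_neg hx.le]
      ring_nf

lemma one_sub_mul_le_mul_sub {C : ℝ} (hC : C < 1) {q p n : ℕ} (hn : n ≠ 0) (hp : (p : ℝ) ≤ C * q) :
    (1 - C) * (q * n) ≤ ((q * n - p : ℕ) : ℝ) := by
  have hn1 : (1 : ℝ) ≤ n := by exact_mod_cast Nat.one_le_iff_ne_zero.mpr hn
  have hpq : (p : ℝ) ≤ q * n := by
    nlinarith [Nat.cast_nonneg (α := ℝ) p, Nat.cast_nonneg (α := ℝ) q]
  rw [Nat.cast_sub (by exact_mod_cast hpq)]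
  push_cast
  nlinarith [Nat.cast_nonneg (α := ℝ) p, Nat.cast_nonneg (α := ℝ) q]

lemma card_divisors_mul_exp_sqrt_le {D δ C : ℝ} (hδ : 0 < δ) (hδ₆ : 6 * δ ≤ 1) (hC : C < 1)
    (hD : ∀ n : ℕ, n ≠ 0 → (#n.divisors : ℝ) ≤ D * (n : ℝ) ^ δ)
    {q p n : ℕ} (hq : q ≠ 0) (hn : n ≠ 0) (hp : (p : ℝ) ≤ C * q) :
    (#n.divisors : ℝ) * #(q * n - p).divisors * ((q * n - p : ℕ) : ℝ)⁻¹ *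
        exp (-√((q * n - p : ℕ) : ℝ) / (2 * (q : ℝ) ^ 2)) ≤
      D ^ 2 * 2 ^ (6 * δ) * (1 - C) ^ (-(1 + 2 * δ)) * (q : ℝ) ^ (10 * δ - 1) *
        ((n : ℝ) ^ (1 + δ))⁻¹ := by
  have hD₀ : 0 ≤ D := by simpa using (zero_le_one (α := ℝ)).trans (by simpa using hD 1 one_ne_zero)
  have hC₀ : 0 < 1 - C := sub_pos.mpr hC
  have hq₀ : (0 : ℝ) < q := by positivity
  have hn₀ : (0 : ℝ) < n := by positivity
  have hm := one_sub_mul_le_mul_sub hC hn hp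
  set m : ℕ := q * n - p
  have hm₀ : (0 : ℝ) < m := lt_of_lt_of_le (by positivity) hm
  have hmD := hD m (by exact_mod_cast hm₀.ne')
  have hexp :=
    exp_neg_sqrt_div_le hm₀ (by positivity : (0 : ℝ) < 2 * (q : ℝ) ^ 2) (by positivity) hδ₆
  have hm_pow : (m : ℝ) ^ δ * (m : ℝ)⁻¹ * (m : ℝ) ^ (-(6 * δ / 2)) = (m : ℝ) ^ (-(1 + 2 * δ)) := by
    rw [← rpow_neg_one, ← rpow_add hm₀, ← rpow_add hm₀]
    ring_nf
  have hq_pow : (2 * (q : ℝ) ^ 2) ^ (6 * δ) * (q : ℝ) ^ (-(1 + 2 * δ)) =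
      2 ^ (6 * δ) * (q : ℝ) ^ (10 * δ - 1) := by
    rw [mul_rpow zero_le_two (by positivity), ← rpow_natCast, ← rpow_mul hq₀.le, mul_assoc,
      ← rpow_add hq₀]
    ring_nf
  have hn_pow : (n : ℝ) ^ δ * (n : ℝ) ^ (-(1 + 2 * δ)) = ((n : ℝ) ^ (1 + δ))⁻¹ := by
    rw [← rpow_add hn₀, ← rpow_neg hn₀.le]
    ring_nf
  calc _ ≤ (D * (n : ℝ) ^ δ) * (D * (m : ℝ) ^ δ) * (m : ℝ)⁻¹ *
        ((2 * (q : ℝ) ^ 2) ^ (6 * δ) * (m : ℝ) ^ (-(6 * δ / 2))) := by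
        gcongr
        exact hD n hn
    _ = D ^ 2 * (2 * (q : ℝ) ^ 2) ^ (6 * δ) * (n : ℝ) ^ δ * (m : ℝ) ^ (-(1 + 2 * δ)) := by
        rw [← hm_pow]; ring
    _ ≤ D ^ 2 * (2 * (q : ℝ) ^ 2) ^ (6 * δ) * (n : ℝ) ^ δ *
          ((1 - C) * (q * n)) ^ (-(1 + 2 * δ)) :=
        mul_le_mul_of_nonneg_left (rpow_le_rpow_of_nonpos (by positivity) hm (by linarith))
          (by positivity)
    _ = D ^ 2 * (1 - C) ^ (-(1 + 2 * δ)) *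
          ((2 * (q : ℝ) ^ 2) ^ (6 * δ) * (q : ℝ) ^ (-(1 + 2 * δ))) *
          ((n : ℝ) ^ δ * (n : ℝ) ^ (-(1 + 2 * δ))) := by
        rw [mul_rpow hC₀.le (by positivity), mul_rpow hq₀.le hn₀.le]
        ring
    _ = _ := by
        rw [hq_pow, hn_pow]
        ring

theorem exp_divisor_sum_bound_general (C : ℝ) (hC1 : C < 1)
    (ε : ℝ) (hε : 0 < ε) :
    ∃ K : ℝ, 0 < K ∧ ∀ q : ℕ, q.Prime → ∀ p : ℕ, 1 ≤ p → (p : ℝ) ≤ C * q →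
      (∑' l : ℕ,
          (((l + 1).divisors.card : ℝ)) * (((q * (l + 1) - p : ℕ).divisors.card : ℝ)) *
            ((q * (l + 1) - p : ℕ) : ℝ)⁻¹ *
            Real.exp (-Real.sqrt (((q * (l + 1) - p : ℕ) : ℝ)) / (2 * (q : ℝ) ^ 2))) ≤
        K * ((q : ℝ) ^ ε * (((q - p : ℕ) : ℝ)) ^ (-1 + ε) + (q : ℝ) ^ (-1 + ε)) := by
  obtain ⟨δ, hδ, hδ₆, hδε⟩ : ∃ δ : ℝ, 0 < δ ∧ 6 * δ ≤ 1 ∧ 10 * δ ≤ ε :=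
    ⟨min (ε / 10) (1 / 6), by positivity, by linarith [min_le_right (ε / 10) (1 / 6)],
      by linarith [min_le_left (ε / 10) (1 / 6)]⟩
  obtain ⟨D, hD₀, hD⟩ := Nat.card_divisors_le_mul_rpow hδ
  have hζ : Summable fun l : ℕ => (((l + 1 : ℕ) : ℝ) ^ (1 + δ))⁻¹ :=
    (summable_nat_add_iff 1).mpr (Real.summable_nat_rpow_inv.mpr (by linarith))
  set K₀ := D ^ 2 * 2 ^ (6 * δ) * (1 - C) ^ (-(1 + 2 * δ))
  have hK₀ : 0 < K₀ := by have := rpow_pos_of_pos (sub_pos.mpr hC1) (-(1 + 2 * δ)); positivity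
  refine ⟨K₀ * ∑' l : ℕ, (((l + 1 : ℕ) : ℝ) ^ (1 + δ))⁻¹,
    mul_pos hK₀ (hζ.tsum_pos (fun _ => by positivity) 0 (by positivity)), ?_⟩
  intro q hq p _ hp
  have hq₁ : (1 : ℝ) ≤ q := by exact_mod_cast hq.one_lt.le
  have hbound := fun l : ℕ =>
    card_divisors_mul_exp_sqrt_le hδ hδ₆ hC1 hD hq.ne_zero l.succ_ne_zero hp
  have hmajorant := hζ.mul_left (K₀ * (q : ℝ) ^ (10 * δ - 1))
  calc _ ≤ ∑' l : ℕ, K₀ * (q : ℝ) ^ (10 * δ - 1) * (((l + 1 : ℕ) : ℝ) ^ (1 + δ))⁻¹ :=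
        Summable.tsum_le_tsum hbound
          (hmajorant.of_nonneg_of_le (fun _ => by positivity) hbound) hmajorant
    _ = (K₀ * ∑' l : ℕ, (((l + 1 : ℕ) : ℝ) ^ (1 + δ))⁻¹) * (q : ℝ) ^ (10 * δ - 1) := by
        rw [tsum_mul_left]; ring
    _ ≤ (K₀ * ∑' l : ℕ, (((l + 1 : ℕ) : ℝ) ^ (1 + δ))⁻¹) * (q : ℝ) ^ (-1 + ε) := by
        gcongr
        linarith
    _ ≤ _ := by
        gcongr
        exact le_add_of_nonneg_left (by positivity)

/-- Key estimate in Lemma 6: for prime `q` and `1 ≤ p ≤ Cq` with fixed `C < 1`,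
`∑_{l≥1} d(l) d(ql-p) (ql-p)^{-1} e^{-√(ql-p)/(2q²)}
  = O_{ε,C}(q^ε (q-p)^{-1+ε} + q^{-1+ε})`. -/
theorem exp_divisor_sum_bound (C : ℝ) (hC0 : 0 < C) (hC1 : C < 1)
    (ε : ℝ) (hε : 0 < ε) :
    ∃ K : ℝ, 0 < K ∧ ∀ q : ℕ, q.Prime → ∀ p : ℕ, 1 ≤ p → (p : ℝ) ≤ C * q →
      (∑' l : ℕ,
          (((l + 1).divisors.card : ℝ)) * (((q * (l + 1) - p : ℕ).divisors.card : ℝ)) *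
            ((q * (l + 1) - p : ℕ) : ℝ)⁻¹ *
            Real.exp (-Real.sqrt (((q * (l + 1) - p : ℕ) : ℝ)) / (2 * (q : ℝ) ^ 2))) ≤
        K * ((q : ℝ) ^ ε * (((q - p : ℕ) : ℝ)) ^ (-1 + ε) + (q : ℝ) ^ (-1 + ε)) :=
  exp_divisor_sum_bound_general C hC1 ε hε
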